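/- arXiv:1812.03743 — 2 statements merged into one kernel-verified Lean document; each statement's English description precedes it below -/
import Mathlib

section
/- Let S be a finite regular semigroup and let k ≥ 1 be an integer. Then S satisfies the identity x = x^{k+2} for all x ∈ S if and only if the map f : S → S given by f(x) = x^k is a permutation matching of S. In particular, S is co-regular (x = x^3 for all x ∈ S) if and only if the identity map on S is a permutation matching. -/
variable {S : Type*}

/-- `b` is an inverse of `a`: `a*b*a = a` and `b*a*b = b`. -/
def IsInverseOf [Semigroup S] (b a : S) : Prop := a * b * a = a ∧ b * a * b = b

/-- `invs a` is the set `V(a)` of inverses of `a`. -/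
def invs [Semigroup S] (a : S) : Set S := {b | IsInverseOf b a}

/-- `invsSet A` is `V(A) = ⋃ a ∈ A, V(a)`. -/
def invsSet [Semigroup S] (A : Set S) : Set S := ⋃ a ∈ A, invs a

/-- A semigroup is regular if every element has an inverse. -/
def IsRegularSemigroup (S : Type*) [Semigroup S] : Prop := ∀ a : S, ∃ b, IsInverseOf b a

/-- A permutation matching: a bijection sending each element to one of its inverses. -/
def IsPermMatching [Semigroup S] (f : S → S) : Prop :=
  Function.Bijective f ∧ ∀ a, f a ∈ invs a

def lSet [Semigroup S] (a : S) : Set S := insert a {x | ∃ s, s * a = x}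
def rSet [Semigroup S] (a : S) : Set S := insert a {x | ∃ s, a * s = x}
/-- Green's L relation. -/
def greenL [Semigroup S] (a b : S) : Prop := lSet a = lSet b
/-- Green's R relation. -/
def greenR [Semigroup S] (a b : S) : Prop := rSet a = rSet b
/-- Green's H relation. -/
def greenH [Semigroup S] (a b : S) : Prop := greenL a b ∧ greenR a b
/-- Green's D relation. -/
def greenD [Semigroup S] (a b : S) : Prop := ∃ c, greenL a c ∧ greenR c b
def dClass [Semigroup S] (a : S) : Set S := {b | greenD a b}
def lClass [Semigroup S] (a : S) : Set S := {b | greenL a b}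
def rClass [Semigroup S] (a : S) : Set S := {b | greenR a b}

/-- `spow x n = x^(n+1)` (positive powers in a semigroup). -/
def spow [Semigroup S] (x : S) : ℕ → S
  | 0 => x
  | n + 1 => spow x n * x

/-- `e` is an idempotent positive power of `x`; in a finite semigroup this
characterises `e = x^ω`. -/
def IsOmega [Semigroup S] (x e : S) : Prop := (∃ k : ℕ, e = spow x k) ∧ e * e = e

/-- `y = x^(ω-1)`: `y = x^m` for the least positive `m` with `x^(m+1)` idempotent
(in a finite semigroup `x^(m+1)` idempotent iff `x^(m+1) = x^ω`). Here `m = k+1`. -/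
def IsOmegaMinusOne [Semigroup S] (x y : S) : Prop :=
  ∃ k : ℕ, y = spow x k ∧ spow x (k+1) * spow x (k+1) = spow x (k+1) ∧
    ∀ j < k, ¬ (spow x (j+1) * spow x (j+1) = spow x (j+1))

/-! If `x = x^(k+2)`, then `x^k x x^k = x^(2k+1) = x^k`, so `x^k` is an inverse of `x`, and
`(x^k)^k = x` because `k² ≡ 1 (mod k+1)`; thus `x ↦ x^k` is an involution, hence a bijection.
Conversely `x x^k x = x^(k+2)`, so `x^k ∈ V(x)` already forces the identity. -/

theorem pow_add_mul_eq_of_pow_succ_eq {M : Type*} [Monoid M] {x : M} {p : ℕ}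
    (h : x ^ (p + 1) = x) (m j : ℕ) : x ^ (m + 1 + j * p) = x ^ (m + 1) := by
  induction j with
  | zero => simp
  | succ j ih =>
    calc x ^ (m + 1 + (j + 1) * p) = x ^ (m + j * p) * x ^ (p + 1) := by
          rw [← pow_add]; congr 1; ring
      _ = x ^ (m + 1 + j * p) := by rw [h, ← pow_succ]; congr 1; ring
      _ = x ^ (m + 1) := ih

section Semigroup

variable [Semigroup S]

/-- Adjoining an identity turns `spow` into monoid powers, so exponent arithmetic reduces to
`pow_add` and `pow_mul`. -/
theorem WithOne.coe_spow (x : S) (n : ℕ) :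
    ((spow x n : S) : WithOne S) = (x : WithOne S) ^ (n + 1) := by
  induction n with
  | zero => simp [spow]
  | succ n ih => rw [spow, WithOne.coe_mul, ih, ← pow_succ]

theorem mul_spow_mul (x : S) (n : ℕ) : x * spow x n * x = spow x (n + 2) := by
  rw [← WithOne.coe_inj]
  simp only [WithOne.coe_mul, WithOne.coe_spow, ← pow_succ', ← pow_succ]

theorem spow_mul_mul_spow (x : S) (n : ℕ) : spow x n * x * spow x n = spow x (2 * n + 2) := by
  rw [← WithOne.coe_inj]
  simp only [WithOne.coe_mul, WithOne.coe_spow, ← pow_succ, ← pow_add]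
  ring_nf

theorem spow_spow (x : S) (n m : ℕ) : spow (spow x n) m = spow x (n * m + n + m) := by
  rw [← WithOne.coe_inj]
  simp only [WithOne.coe_spow, ← pow_mul]
  ring_nf

theorem spow_add_mul_eq_of_eq_spow {x : S} {p : ℕ} (h : x = spow x p) (m j : ℕ) :
    spow x (m + j * p) = spow x m := by
  rw [← WithOne.coe_inj] at h ⊢
  rw [WithOne.coe_spow] at h
  simp only [WithOne.coe_spow, ← pow_add_mul_eq_of_pow_succ_eq h.symm m j]
  ring_nf

theorem spow_mem_invs_of_eq_spow {x : S} {n : ℕ} (h : x = spow x (n + 2)) :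
    spow x n ∈ invs x := by
  refine ⟨by rw [mul_spow_mul, ← h], ?_⟩
  rw [spow_mul_mul_spow, show 2 * n + 2 = n + 1 * (n + 2) by ring]
  exact spow_add_mul_eq_of_eq_spow h n 1

theorem eq_spow_of_spow_mem_invs {x : S} {n : ℕ} (h : spow x n ∈ invs x) :
    x = spow x (n + 2) := by
  rw [← mul_spow_mul, h.1]

theorem spow_spow_eq_self_of_eq_spow {x : S} {n : ℕ} (h : x = spow x (n + 2)) :
    spow (spow x n) n = x := by
  rw [spow_spow, show n * n + n + n = 0 + n * (n + 2) by ring]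
  exact spow_add_mul_eq_of_eq_spow h 0 n

theorem forall_eq_spow_iff_isPermMatching (n : ℕ) :
    (∀ x : S, x = spow x (n + 2)) ↔ IsPermMatching (fun x : S => spow x n) :=
  ⟨fun h => ⟨Function.Involutive.bijective fun x => spow_spow_eq_self_of_eq_spow (h x),
      fun x => spow_mem_invs_of_eq_spow (h x)⟩,
    fun h x => eq_spow_of_spow_mem_invs (h.2 x)⟩

end Semigroup

theorem stmt_9_general (S : Type*) [Semigroup S]
    (k : ℕ) (hk : 1 ≤ k) :
    ((∀ x : S, x = spow x (k + 1)) ↔ IsPermMatching (fun x : S => spow x (k - 1))) ∧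
    ((∀ x : S, x = x * x * x) ↔ IsPermMatching (id : S → S)) := by
  obtain ⟨n, rfl⟩ : ∃ n, k = n + 1 := ⟨k - 1, by omega⟩
  -- `spow x 2` unfolds to `x * x * x` and `spow x 0` to `x`.
  exact ⟨forall_eq_spow_iff_isPermMatching n, forall_eq_spow_iff_isPermMatching 0⟩

/-- Theorem 2.1(iv). A finite regular semigroup satisfies `x = x^(k+2)`
(`k ≥ 1`) iff `x ↦ x^k` is a permutation matching; in particular it is co-regular
(`x = x^3`) iff the identity map is a permutation matching.
(Recall `spow x n = x^(n+1)`, so `x^(k+2) = spow x (k+1)` and `x^k = spow x (k-1)`.) -/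
theorem stmt_9 (S : Type*) [Semigroup S] [Fintype S]
    (hreg : IsRegularSemigroup S) (k : ℕ) (hk : 1 ≤ k) :
    ((∀ x : S, x = spow x (k + 1)) ↔ IsPermMatching (fun x : S => spow x (k - 1))) ∧
    ((∀ x : S, x = x * x * x) ↔ IsPermMatching (id : S → S)) :=
  stmt_9_general S k hk
end

section
/- Let S be a finite orthodox 0-rectangular band and let e ∈ S be a nonzero idempotent. Then V(e), the set of inverses of e, is a maximal rectangular subband of S. -/
variable {S : Type*}

/-- `T` is a rectangular subband: closed under multiplication with `a*b*a = a` on `T`. -/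
def IsRectSubband [Semigroup S] (T : Set S) : Prop :=
  (∀ a ∈ T, ∀ b ∈ T, a * b ∈ T) ∧ ∀ a ∈ T, ∀ b ∈ T, a * b * a = a


section AuxStmt15

variable {S : Type*} [Semigroup S]

private lemma spow_succ'15 (x : S) (n : ℕ) : spow x (n+1) = x * spow x n := by
  induction n with
  | zero => rfl
  | succ n ih =>
    show spow x (n+1) * x = x * (spow x n * x)
    rw [ih, mul_assoc]

private lemma spow_add15 (x : S) (m n : ℕ) : spow x (m + n + 1) = spow x m * spow x n := by
  induction n with
  | zero => rfl
  | succ n ih =>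
    show spow x (m + n + 1) * x = spow x m * (spow x n * x)
    rw [ih, mul_assoc]

private lemma spow_per15 (x : S) {i d : ℕ} (h : spow x i = spow x (i + d)) :
    ∀ r, spow x (i + r) = spow x (i + r + d) := by
  intro r
  induction r with
  | zero => simpa using h
  | succ r ih =>
    have e1 : i + (r+1) + d = (i + r + d) + 1 := by omega
    have e2 : i + (r+1) = (i + r) + 1 := by omega
    rw [e1, e2]
    show spow x (i+r) * x = spow x (i+r+d) * x
    rw [ih]

private lemma spow_per_mul15 (x : S) {i d : ℕ} (h : spow x i = spow x (i + d)) :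
    ∀ k r, spow x (i + r) = spow x (i + r + k * d) := by
  intro k
  induction k with
  | zero => intro r; simp
  | succ k ih =>
    intro r
    have e1 : i + (r + k*d) = i + r + k*d := by ring
    have e2 : i + (r + k*d) + d = i + r + (k+1)*d := by ring
    calc spow x (i + r) = spow x (i + (r + k*d)) := by rw [e1]; exact ih r
    _ = spow x (i + (r + k*d) + d) := spow_per15 x h _
    _ = spow x (i + r + (k+1)*d) := by rw [e2]

private lemma exists_idem_spow15 [Fintype S] (x : S) :
    ∃ m, spow x m * spow x m = spow x m := by
  obtain ⟨i, j, hne, heq⟩ := Finite.exists_ne_map_eq_of_infinite (spow x)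
  have key : ∃ i d, 0 < d ∧ spow x i = spow x (i + d) := by
    rcases Nat.lt_or_ge i j with h | h
    · exact ⟨i, j - i, by omega, by rw [show i + (j-i) = j by omega]; exact heq⟩
    · have hlt : j < i := lt_of_le_of_ne h (Ne.symm hne)
      exact ⟨j, i - j, by omega, by rw [show j + (i-j) = i by omega]; exact heq.symm⟩
  obtain ⟨i, d, hd, hper⟩ := key
  have hD1 : i + 1 ≤ d * (i+1) := by
    calc i + 1 = 1 * (i+1) := (one_mul _).symm
    _ ≤ d * (i+1) := Nat.mul_le_mul_right _ hd
  set D := d * (i + 1) with hD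
  refine ⟨D - 1, ?_⟩
  have h1 := spow_per_mul15 x hper (i+1) (D - 1 - i)
  have e3 : i + (D - 1 - i) = D - 1 := by omega
  have e4 : (D - 1) + (i+1)*d = (D-1) + (D-1) + 1 := by
    rw [Nat.mul_comm (i+1) d, ← hD]; omega
  rw [e3, e4, spow_add15] at h1
  exact h1.symm

private lemma mem_rSet15 {x w : S} : w ∈ rSet x ↔ (w = x ∨ ∃ s, x * s = w) :=
  Set.mem_insert_iff

private lemma mem_lSet15 {x w : S} : w ∈ lSet x ↔ (w = x ∨ ∃ s, s * x = w) :=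
  Set.mem_insert_iff

private lemma rSet_mono15 {x w : S} (h : w ∈ rSet x) : rSet w ⊆ rSet x := by
  rcases mem_rSet15.mp h with h | ⟨s, hs⟩
  · subst h; exact subset_rfl
  · intro v hv
    rcases mem_rSet15.mp hv with hv | ⟨t, ht⟩
    · exact mem_rSet15.mpr (Or.inr ⟨s, hs.trans hv.symm⟩)
    · exact mem_rSet15.mpr (Or.inr ⟨s*t, by rw [← mul_assoc, hs, ht]⟩)

private lemma lSet_mono15 {x w : S} (h : w ∈ lSet x) : lSet w ⊆ lSet x := by
  rcases mem_lSet15.mp h with h | ⟨s, hs⟩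
  · subst h; exact subset_rfl
  · intro v hv
    rcases mem_lSet15.mp hv with hv | ⟨t, ht⟩
    · exact mem_lSet15.mpr (Or.inr ⟨s, hs.trans hv.symm⟩)
    · exact mem_lSet15.mpr (Or.inr ⟨t*s, by rw [mul_assoc, hs, ht]⟩)

private lemma greenR_of_mem15 {x y : S} (h1 : x ∈ rSet y) (h2 : y ∈ rSet x) :
    greenR x y :=
  Set.Subset.antisymm (rSet_mono15 h1) (rSet_mono15 h2)

private lemma greenL_of_mem15 {x y : S} (h1 : x ∈ lSet y) (h2 : y ∈ lSet x) :
    greenL x y :=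
  Set.Subset.antisymm (lSet_mono15 h1) (lSet_mono15 h2)

private lemma stab_pow15 {x s u : S} (hx : x = s * x * u) :
    ∀ n, x = spow s n * x * spow u n := by
  intro n
  induction n with
  | zero => exact hx
  | succ n ih =>
    calc x = s * x * u := hx
    _ = s * (spow s n * x * spow u n) * u := by rw [← ih]
    _ = spow s (n+1) * x * spow u (n+1) := by
        rw [spow_succ'15 s n, show spow u (n+1) = spow u n * u from rfl]
        simp only [mul_assoc]

private lemma stabR15 [Fintype S] {x s u : S} (hx : x = s * x * u) :
    x ∈ rSet (x * u) := by
  obtain ⟨m, hm⟩ := exists_idem_spow15 u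
  have h1 : x = x * spow u m := by
    calc x = spow s m * x * spow u m := stab_pow15 hx m
    _ = spow s m * x * (spow u m * spow u m) := by rw [hm]
    _ = spow s m * x * spow u m * spow u m := by rw [← mul_assoc]
    _ = x * spow u m := by rw [← stab_pow15 hx m]
  cases m with
  | zero => exact mem_rSet15.mpr (Or.inl h1)
  | succ k =>
    refine mem_rSet15.mpr (Or.inr ⟨spow u k, ?_⟩)
    rw [mul_assoc, ← spow_succ'15 u k]
    exact h1.symm

private lemma stabL15 [Fintype S] {x s u : S} (hx : x = s * x * u) :
    x ∈ lSet (s * x) := by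
  obtain ⟨m, hm⟩ := exists_idem_spow15 s
  have h1 : x = spow s m * x := by
    calc x = spow s m * x * spow u m := stab_pow15 hx m
    _ = (spow s m * spow s m) * x * spow u m := by rw [hm]
    _ = spow s m * (spow s m * x * spow u m) := by simp only [mul_assoc]
    _ = spow s m * x := by rw [← stab_pow15 hx m]
  cases m with
  | zero => exact mem_lSet15.mpr (Or.inl h1)
  | succ k =>
    refine mem_lSet15.mpr (Or.inr ⟨spow s k, ?_⟩)
    rw [← mul_assoc]
    exact h1.symm

private lemma assoc3_15 {x y w r : S} (h : x*y*w = r) : x*(y*w) = r := by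
  rw [← mul_assoc]; exact h

private lemma cont3_15 {x y w r : S} (h : x*y*w = r) (t : S) : x*(y*(w*t)) = r*t := by
  simp only [← mul_assoc]; rw [h]

private lemma cont2_15 {x y r : S} (h : x*y = r) (t : S) : x*(y*t) = r*t := by
  rw [← mul_assoc, h]

private lemma greenA15 [Fintype S] (z : S)
    (hz : ∀ x : S, z * x = z ∧ x * z = z)
    (hsimp : ∀ I : Set S, I.Nonempty →
      (∀ a ∈ I, ∀ s : S, s * a ∈ I ∧ a * s ∈ I) → I = {z} ∨ I = Set.univ)
    {x y : S} (hxy : x * y ≠ z) :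
    greenR x (x*y) ∧ greenL y (x*y) := by
  classical
  set I : Set S := {u | u = z ∨ u = x*y ∨ (∃ s, u = s*(x*y)) ∨ (∃ t, u = (x*y)*t) ∨
      ∃ s t, u = s*(x*y)*t} with hI
  have hmem : ∀ u : S, u ∈ I ↔ (u = z ∨ u = x*y ∨ (∃ s, u = s*(x*y)) ∨
      (∃ t, u = (x*y)*t) ∨ ∃ s t, u = s*(x*y)*t) := fun u => Iff.rfl
  have hclosed : ∀ a ∈ I, ∀ s : S, s * a ∈ I ∧ a * s ∈ I := by
    intro a ha s
    rcases (hmem a).mp ha with rfl | rfl | ⟨p, rfl⟩ | ⟨p, rfl⟩ | ⟨p, q, rfl⟩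
    · exact ⟨(hmem _).mpr (Or.inl (hz s).2), (hmem _).mpr (Or.inl (hz s).1)⟩
    · exact ⟨(hmem _).mpr (Or.inr (Or.inr (Or.inl ⟨s, rfl⟩))),
        (hmem _).mpr (Or.inr (Or.inr (Or.inr (Or.inl ⟨s, rfl⟩))))⟩
    · refine ⟨(hmem _).mpr (Or.inr (Or.inr (Or.inl ⟨s*p, ?_⟩))),
        (hmem _).mpr (Or.inr (Or.inr (Or.inr (Or.inr ⟨p, s, rfl⟩))))⟩
      simp only [mul_assoc]
    · refine ⟨(hmem _).mpr (Or.inr (Or.inr (Or.inr (Or.inr ⟨s, p, ?_⟩)))),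
        (hmem _).mpr (Or.inr (Or.inr (Or.inr (Or.inl ⟨p*s, ?_⟩))))⟩
      · simp only [mul_assoc]
      · simp only [mul_assoc]
    · refine ⟨(hmem _).mpr (Or.inr (Or.inr (Or.inr (Or.inr ⟨s*p, q, ?_⟩)))),
        (hmem _).mpr (Or.inr (Or.inr (Or.inr (Or.inr ⟨p, q*s, ?_⟩))))⟩
      · simp only [mul_assoc]
      · simp only [mul_assoc]
  have hne : I.Nonempty := ⟨z, (hmem z).mpr (Or.inl rfl)⟩
  rcases hsimp I hne hclosed with h1 | h1
  · exfalso
    have hw : x*y ∈ I := (hmem _).mpr (Or.inr (Or.inl rfl))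
    rw [h1] at hw
    exact hxy hw
  · have hx' : x ∈ I := by rw [h1]; trivial
    have hy' : y ∈ I := by rw [h1]; trivial
    have hxmem : x ∈ rSet (x*y) := by
      rcases (hmem x).mp hx' with rfl | h | ⟨p, h⟩ | ⟨p, h⟩ | ⟨p, q, h⟩
      · exact absurd (hz y).1 hxy
      · exact mem_rSet15.mpr (Or.inl h)
      · have h2 : x = p*x*y := by rw [mul_assoc]; exact h
        exact stabR15 h2
      · exact mem_rSet15.mpr (Or.inr ⟨p, h.symm⟩)
      · have h2 : x = p*x*(y*q) := by
          calc x = p*(x*y)*q := h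
          _ = p*x*(y*q) := by simp only [mul_assoc]
        have h3 := stabR15 h2
        have h4 : x*(y*q) ∈ rSet (x*y) :=
          mem_rSet15.mpr (Or.inr ⟨q, mul_assoc x y q⟩)
        exact rSet_mono15 h4 h3
    have hymem : y ∈ lSet (x*y) := by
      rcases (hmem y).mp hy' with rfl | h | ⟨p, h⟩ | ⟨p, h⟩ | ⟨p, q, h⟩
      · exact absurd (hz x).2 hxy
      · exact mem_lSet15.mpr (Or.inl h)
      · exact mem_lSet15.mpr (Or.inr ⟨p, h.symm⟩)
      · have h2 : y = x*y*p := h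
        exact stabL15 h2
      · have h2 : y = (p*x)*y*q := by
          calc y = p*(x*y)*q := h
          _ = (p*x)*y*q := by simp only [mul_assoc]
        have h3 := stabL15 h2
        have h4 : (p*x)*y ∈ lSet (x*y) :=
          mem_lSet15.mpr (Or.inr ⟨p, (mul_assoc p x y).symm⟩)
        exact lSet_mono15 h4 h3
    constructor
    · exact greenR_of_mem15 hxmem (mem_rSet15.mpr (Or.inr ⟨y, rfl⟩))
    · exact greenL_of_mem15 hymem (mem_lSet15.mpr (Or.inr ⟨x, rfl⟩))

end AuxStmt15

/-- Lemma 3.2. In a finite orthodox 0-rectangular band, the set of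
inverses `V(e)` of a nonzero idempotent `e` is a maximal rectangular subband. -/
theorem stmt_15 (S : Type*) [Semigroup S] [Fintype S]
    (z : S) (hz : ∀ x : S, z * x = z ∧ x * z = z)
    (hreg : IsRegularSemigroup S)
    (horth : ∀ e f : S, e * e = e → f * f = f → (e * f) * (e * f) = e * f)
    (h0simple : (∃ a b : S, a * b ≠ z) ∧
      ∀ I : Set S, I.Nonempty → (∀ a ∈ I, ∀ s : S, s * a ∈ I ∧ a * s ∈ I) →
        I = {z} ∨ I = Set.univ)
    (hH : ∀ a b : S, greenH a b → a = b)
    (e : S) (he : e ≠ z) (hee : e * e = e) :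
    IsRectSubband (invs e) ∧
      ∀ T : Set S, IsRectSubband T → invs e ⊆ T → T = invs e := by
  have einv : e ∈ invs e := ⟨by rw [hee, hee], by rw [hee, hee]⟩
  have main : ∀ a ∈ invs e, ∀ b ∈ invs e, a * b = a * e * b := by
    intro a ha b hb
    obtain ⟨hea, haa⟩ := ha
    obtain ⟨heb, hbb⟩ := hb
    have hae : (a*e)*(a*e) = a*e := by
      simp only [mul_assoc, cont3_15 hea, assoc3_15 hea, cont3_15 haa, assoc3_15 haa,
        cont3_15 heb, assoc3_15 heb, cont3_15 hbb, assoc3_15 hbb, cont2_15 hee, hee]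
    have hea2 : (e*a)*(e*a) = e*a := by
      simp only [mul_assoc, cont3_15 hea, assoc3_15 hea, cont3_15 haa, assoc3_15 haa,
        cont3_15 heb, assoc3_15 heb, cont3_15 hbb, assoc3_15 hbb, cont2_15 hee, hee]
    have hbe : (b*e)*(b*e) = b*e := by
      simp only [mul_assoc, cont3_15 hea, assoc3_15 hea, cont3_15 haa, assoc3_15 haa,
        cont3_15 heb, assoc3_15 heb, cont3_15 hbb, assoc3_15 hbb, cont2_15 hee, hee]
    have heb2 : (e*b)*(e*b) = e*b := by
      simp only [mul_assoc, cont3_15 hea, assoc3_15 hea, cont3_15 haa, assoc3_15 haa,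
        cont3_15 heb, assoc3_15 heb, cont3_15 hbb, assoc3_15 hbb, cont2_15 hee, hee]
    have hg2 : (b*e)*(e*a) = b*e*a := by
      simp only [mul_assoc, cont3_15 hea, assoc3_15 hea, cont3_15 haa, assoc3_15 haa,
        cont3_15 heb, assoc3_15 heb, cont3_15 hbb, assoc3_15 hbb, cont2_15 hee, hee]
    have hh2 : (a*e)*(e*b) = a*e*b := by
      simp only [mul_assoc, cont3_15 hea, assoc3_15 hea, cont3_15 haa, assoc3_15 haa,
        cont3_15 heb, assoc3_15 heb, cont3_15 hbb, assoc3_15 hbb, cont2_15 hee, hee]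
    have hege : e*(b*e*a)*e = e := by
      simp only [mul_assoc, cont3_15 hea, assoc3_15 hea, cont3_15 haa, assoc3_15 haa,
        cont3_15 heb, assoc3_15 heb, cont3_15 hbb, assoc3_15 hbb, cont2_15 hee, hee]
    have hehe : e*(a*e*b)*e = e := by
      simp only [mul_assoc, cont3_15 hea, assoc3_15 hea, cont3_15 haa, assoc3_15 haa,
        cont3_15 heb, assoc3_15 heb, cont3_15 hbb, assoc3_15 hbb, cont2_15 hee, hee]
    have hFa : (a*e*b)*(e*a) = a := by
      simp only [mul_assoc, cont3_15 hea, assoc3_15 hea, cont3_15 haa, assoc3_15 haa,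
        cont3_15 heb, assoc3_15 heb, cont3_15 hbb, assoc3_15 hbb, cont2_15 hee, hee]
    have hGb : (b*e)*(a*e*b) = b := by
      simp only [mul_assoc, cont3_15 hea, assoc3_15 hea, cont3_15 haa, assoc3_15 haa,
        cont3_15 heb, assoc3_15 heb, cont3_15 hbb, assoc3_15 hbb, cont2_15 hee, hee]
    have hgidem : (b*e*a)*(b*e*a) = b*e*a := by
      have h := horth (b*e) (e*a) hbe hea2
      rw [hg2] at h; exact h
    have habz : a*b ≠ z := by
      intro h0
      have h1 : (b*e*a)*(b*e*a) = b*e*((a*b)*(e*a)) := by simp only [mul_assoc]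
      rw [hgidem, h0, (hz (e*a)).1, (hz (b*e)).2] at h1
      apply he
      calc e = e*(b*e*a)*e := hege.symm
      _ = z := by rw [h1, (hz e).2, (hz e).1]
    obtain ⟨hR1, hL1⟩ := greenA15 z hz h0simple.2 habz
    have hR2 : greenR a (a*e*b) :=
      greenR_of_mem15 (mem_rSet15.mpr (Or.inr ⟨e*a, hFa⟩))
        (mem_rSet15.mpr (Or.inr ⟨e*b, (mul_assoc a e b).symm⟩))
    have hL2 : greenL b (a*e*b) :=
      greenL_of_mem15 (mem_lSet15.mpr (Or.inr ⟨b*e, hGb⟩))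
        (mem_lSet15.mpr (Or.inr ⟨a*e, rfl⟩))
    apply hH
    constructor
    · have h1 : lSet b = lSet (a*b) := hL1
      have h2 : lSet b = lSet (a*e*b) := hL2
      exact h1.symm.trans h2
    · have h1 : rSet a = rSet (a*b) := hR1
      have h2 : rSet a = rSet (a*e*b) := hR2
      exact h1.symm.trans h2
  have key2 : ∀ a ∈ invs e, ∀ b ∈ invs e, a*e*b ∈ invs e := by
    intro a ha b hb
    obtain ⟨hea, haa⟩ := ha
    obtain ⟨heb, hbb⟩ := hb
    constructor
    · simp only [mul_assoc, cont3_15 hea, assoc3_15 hea, cont3_15 haa, assoc3_15 haa,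
        cont3_15 heb, assoc3_15 heb, cont3_15 hbb, assoc3_15 hbb, cont2_15 hee, hee]
    · simp only [mul_assoc, cont3_15 hea, assoc3_15 hea, cont3_15 haa, assoc3_15 haa,
        cont3_15 heb, assoc3_15 heb, cont3_15 hbb, assoc3_15 hbb, cont2_15 hee, hee]
  have key3 : ∀ a ∈ invs e, ∀ b ∈ invs e, a*e*(b*e*a) = a := by
    intro a ha b hb
    obtain ⟨hea, haa⟩ := ha
    obtain ⟨heb, hbb⟩ := hb
    simp only [mul_assoc, cont3_15 hea, assoc3_15 hea, cont3_15 haa, assoc3_15 haa,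
        cont3_15 heb, assoc3_15 heb, cont3_15 hbb, assoc3_15 hbb, cont2_15 hee, hee]
  refine ⟨⟨?_, ?_⟩, ?_⟩
  · intro a ha b hb
    rw [main a ha b hb]
    exact key2 a ha b hb
  · intro a ha b hb
    rw [main a ha b hb, mul_assoc (a*e) b a, main b hb a ha]
    exact key3 a ha b hb
  · intro T hT hsub
    apply Set.Subset.antisymm
    · intro t ht
      have heT : e ∈ T := hsub einv
      exact ⟨hT.2 e heT t ht, hT.2 t ht e heT⟩
    · exact hsub
end
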